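/- arXiv:1904.12697 — 4 statements merged into one kernel-verified Lean document; each statement's English description precedes it below -/
import Mathlib

section
/- For y_1, y_2 ∈ [−1,1] with |y_1 − y_2| ≤ δ where δ ∈ (0,2), one has |arccos(y_1) − arccos(y_2)| ≤ arccos(1 − δ). -/
open Real in
lemma my_arccos_le_arccos {x y : ℝ} (hx : -1 ≤ x) (hxy : x ≤ y) :
    Real.arccos y ≤ Real.arccos x := by
  simp only [Real.arccos]
  have := Real.monotone_arcsin hxy
  linarith

theorem stmt_11 (δ : ℝ) (hδ : δ ∈ Set.Ioo (0 : ℝ) 2)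
    (y₁ y₂ : ℝ) (hy₁ : y₁ ∈ Set.Icc (-1 : ℝ) 1) (hy₂ : y₂ ∈ Set.Icc (-1 : ℝ) 1)
    (h : |y₁ - y₂| ≤ δ) :
    |Real.arccos y₁ - Real.arccos y₂| ≤ Real.arccos (1 - δ) := by
  obtain ⟨hδ0, hδ2⟩ := hδ
  wlog hle : y₁ ≤ y₂ generalizing y₁ y₂
  · rw [abs_sub_comm] at h ⊢
    exact this y₂ y₁ hy₂ hy₁ h (le_of_not_ge hle)
  set a := Real.arccos y₁ with ha
  set b := Real.arccos y₂ with hb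
  have hba : b ≤ a := my_arccos_le_arccos hy₁.1 hle
  have ha0 : 0 ≤ a := Real.arccos_nonneg _
  have haπ : a ≤ Real.pi := Real.arccos_le_pi _
  have hb0 : 0 ≤ b := Real.arccos_nonneg _
  have hbπ : b ≤ Real.pi := Real.arccos_le_pi _
  have hca : Real.cos a = y₁ := Real.cos_arccos hy₁.1 hy₁.2
  have hcb : Real.cos b = y₂ := Real.cos_arccos hy₂.1 hy₂.2
  have hsa : 0 ≤ Real.sin a := Real.sin_nonneg_of_nonneg_of_le_pi ha0 haπ
  have hsb : 0 ≤ Real.sin b := Real.sin_nonneg_of_nonneg_of_le_pi hb0 hbπ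
  have h1 : y₂ - y₁ ≤ δ := by
    have := abs_le.mp h
    linarith [this.1]
  have hkey : 1 - δ ≤ Real.cos (a - b) := by
    rw [Real.cos_sub]
    nlinarith [Real.sin_sq_add_cos_sq a, Real.sin_sq_add_cos_sq b,
      mul_nonneg hsa hsb, sq_nonneg (Real.sin a - Real.sin b),
      sq_nonneg (Real.sin a * Real.sin b - (1 + y₁) * (1 - y₂)),
      sq_nonneg (Real.sin a * Real.sin b + (1 + y₁) * (1 - y₂)),
      mul_nonneg (mul_nonneg hsa hsb) (mul_nonneg hsa hsb)]
  rw [abs_of_nonneg (by linarith)]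
  calc a - b = Real.arccos (Real.cos (a - b)) :=
        (Real.arccos_cos (by linarith) (by linarith)).symm
    _ ≤ Real.arccos (1 - δ) := my_arccos_le_arccos (by linarith) hkey
end

section
/- Let θ_r, θ_i, θ̃_r, θ̃_i ∈ [0, π/2] with |θ̃_r − θ_r| ≤ π√(nε)/(2√2) and |θ̃_i − θ_i| ≤ π√(nε)/(2√2), and let ỹ_r, ỹ_i be such that |ỹ_r π/2^{t−1} − 2θ̃_r| ≤ π/2^m and |ỹ_i π/2^{t−1} − 2θ̃_i| ≤ π/2^m. Define |d̃⟩ = R_Z(−π/2) R_Z(ỹ_i π/2^{t−1}) R_Y(ỹ_r π/2^{t−1}) |0⟩ and |d⟩ = R_Z(−π/2) R_Z(2θ_i) R_Y(2θ_r) |0⟩. Then ‖|d̃⟩ − |d⟩‖ ≤ π/2^{m−1} + π√(nε)/√2. -/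
open Complex

noncomputable def RY (β : ℝ) : Matrix (Fin 2) (Fin 2) ℂ :=
  !![(Real.cos (β / 2) : ℂ), -(Real.sin (β / 2) : ℂ);
     (Real.sin (β / 2) : ℂ), (Real.cos (β / 2) : ℂ)]

noncomputable def RZ (γ : ℝ) : Matrix (Fin 2) (Fin 2) ℂ :=
  !![Complex.exp (-I * γ / 2), 0; 0, Complex.exp (I * γ / 2)]

noncomputable def ket0 : Fin 2 → ℂ := fun i => if i = 0 then 1 else 0

/-- View a plain vector of `ℂ^2` as an element of Euclidean space (ℓ² norm). -/
noncomputable def toE (v : Fin 2 → ℂ) : EuclideanSpace ℂ (Fin 2) := WithLp.toLp 2 v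

/-!
The state `RZ (-π/2) * RZ γ * RY β |0⟩` is
`(e^{-iφ} cos (β/2), e^{iφ} sin (β/2))` with `φ = γ/2 - π/4`. Changing `β` rotates the real
amplitude vector `(cos (β/2), sin (β/2))` by `Δβ/2`, changing `γ` shifts both phases by `Δγ/2`,
and a rotation by an angle `η` moves a point of the unit circle by at most `|η|`; the triangle
inequality gives `‖Δ state‖ ≤ |Δβ|/2 + |Δγ|/2`. Each angle is off by at most
`π/2^m + 2 |θ̃ - θ|`, the error of the phase estimate plus twice the error of `θ̃`.
-/

theorem norm_exp_I_mul_sub_exp_I_mul_le (x y : ℝ) :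
    ‖exp (I * x) - exp (I * y)‖ ≤ |x - y| := by
  have h : exp (I * x) - exp (I * y) = exp (I * y) * (exp (I * ↑(x - y)) - 1) := by
    rw [mul_sub, ← exp_add, mul_one]; push_cast; ring_nf
  rw [h, norm_mul, norm_exp_I_mul_ofReal, one_mul]
  exact Real.norm_exp_I_mul_ofReal_sub_one_le

theorem norm_exp_I_mul_sub_exp_I_mul (x y : ℝ) :
    ‖exp (I * x) - exp (I * y)‖ =
      √((Real.cos x - Real.cos y) ^ 2 + (Real.sin x - Real.sin y) ^ 2) := by
  rw [mul_comm I, mul_comm I, exp_mul_I, exp_mul_I, ← ofReal_cos, ← ofReal_sin, ← ofReal_cos,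
    ← ofReal_sin, ← norm_add_mul_I]
  push_cast; ring_nf

theorem norm_toE_sub (u w : Fin 2 → ℂ) :
    ‖toE u - toE w‖ = √(‖u 0 - w 0‖ ^ 2 + ‖u 1 - w 1‖ ^ 2) := by
  simp [EuclideanSpace.norm_eq, Fin.sum_univ_two, toE]

noncomputable def rotState (β γ : ℝ) : Fin 2 → ℂ :=
  ![exp (I * ↑(Real.pi / 4 - γ / 2)) * Real.cos (β / 2),
    exp (I * ↑(γ / 2 - Real.pi / 4)) * Real.sin (β / 2)]

theorem rotations_mulVec_ket0 (β γ : ℝ) :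
    (RZ (-(Real.pi / 2))).mulVec ((RZ γ).mulVec ((RY β).mulVec ket0)) = rotState β γ := by
  ext i
  fin_cases i <;>
    simp only [Matrix.mulVec, dotProduct, Fin.sum_univ_two, RZ, RY, ket0, rotState, Fin.isValue,
      Fin.zero_eta, Fin.mk_one, Matrix.of_apply, Matrix.cons_val', Matrix.cons_val_fin_one,
      Matrix.cons_val_zero, Matrix.cons_val_one, ofReal_neg, ofReal_div, ofReal_ofNat, ofReal_sub,
      ofReal_cos, ofReal_sin, mul_neg, neg_mul, neg_neg, mul_ite, mul_one, mul_zero, zero_mul,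
      add_zero, zero_add, Finset.sum_ite_eq', Finset.mem_univ, ↓reduceIte] <;>
  · rw [← mul_assoc, ← exp_add]
    congr 2
    ring

theorem norm_rotState_sub_of_angle (β β' γ : ℝ) :
    ‖toE (rotState β' γ) - toE (rotState β γ)‖ ≤ |β' - β| / 2 := by
  rw [norm_toE_sub]
  simp only [rotState, Matrix.cons_val_zero, Matrix.cons_val_one, ← mul_sub, norm_mul,
    norm_exp_I_mul_ofReal, one_mul, ← ofReal_sub, norm_real, Real.norm_eq_abs, sq_abs]
  rw [← norm_exp_I_mul_sub_exp_I_mul]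
  calc _ ≤ |β' / 2 - β / 2| := norm_exp_I_mul_sub_exp_I_mul_le _ _
    _ = |β' - β| / 2 := by rw [← sub_div, abs_div, abs_two]

theorem norm_rotState_sub_of_phase (β γ γ' : ℝ) :
    ‖toE (rotState β γ') - toE (rotState β γ)‖ ≤ |γ' - γ| / 2 := by
  have h0 : ‖exp (I * ↑(Real.pi / 4 - γ' / 2)) - exp (I * ↑(Real.pi / 4 - γ / 2))‖ ≤
      |γ' - γ| / 2 := by
    refine (norm_exp_I_mul_sub_exp_I_mul_le _ _).trans_eq ?_
    rw [show Real.pi / 4 - γ' / 2 - (Real.pi / 4 - γ / 2) = -((γ' - γ) / 2) by ring, abs_neg,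
      abs_div, abs_two]
  have h1 : ‖exp (I * ↑(γ' / 2 - Real.pi / 4)) - exp (I * ↑(γ / 2 - Real.pi / 4))‖ ≤
      |γ' - γ| / 2 := by
    refine (norm_exp_I_mul_sub_exp_I_mul_le _ _).trans_eq ?_
    rw [show γ' / 2 - Real.pi / 4 - (γ / 2 - Real.pi / 4) = (γ' - γ) / 2 by ring, abs_div,
      abs_two]
  rw [norm_toE_sub]
  simp only [rotState, Matrix.cons_val_zero, Matrix.cons_val_one, ← sub_mul, norm_mul,
    norm_real, Real.norm_eq_abs, mul_pow, sq_abs]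
  refine Real.sqrt_le_iff.mpr ⟨by positivity, ?_⟩
  have hpyth := Real.cos_sq_add_sin_sq (β / 2)
  nlinarith [mul_le_mul_of_nonneg_right (pow_le_pow_left₀ (norm_nonneg _) h0 2)
      (sq_nonneg (Real.cos (β / 2))),
    mul_le_mul_of_nonneg_right (pow_le_pow_left₀ (norm_nonneg _) h1 2)
      (sq_nonneg (Real.sin (β / 2)))]

theorem norm_rotState_sub_le (β β' γ γ' : ℝ) :
    ‖toE (rotState β' γ') - toE (rotState β γ)‖ ≤ |β' - β| / 2 + |γ' - γ| / 2 := by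
  calc _ ≤ ‖toE (rotState β' γ') - toE (rotState β' γ)‖ +
        ‖toE (rotState β' γ) - toE (rotState β γ)‖ := norm_sub_le_norm_sub_add_norm_sub _ _ _
    _ ≤ |γ' - γ| / 2 + |β' - β| / 2 :=
        add_le_add (norm_rotState_sub_of_phase β' γ γ') (norm_rotState_sub_of_angle β β' γ)
    _ = |β' - β| / 2 + |γ' - γ| / 2 := add_comm _ _

theorem abs_sub_two_mul_le {y θ θ' a b : ℝ} (hy : |y - 2 * θ'| ≤ a) (hθ : |θ' - θ| ≤ b) :
    |y - 2 * θ| ≤ a + 2 * b := by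
  have h := abs_sub_le y (2 * θ') (2 * θ)
  rw [← mul_sub, abs_mul, abs_two] at h
  linarith

theorem stmt_14_general (n t m : ℕ)
    (ε : ℝ)
    (θr θi θtr θti : ℝ)
    (hr : |θtr - θr| ≤ Real.pi * Real.sqrt (n * ε) / (2 * Real.sqrt 2))
    (hi : |θti - θi| ≤ Real.pi * Real.sqrt (n * ε) / (2 * Real.sqrt 2))
    (ytr yti : ℝ)
    (hyr : |ytr * Real.pi / 2 ^ (t - 1) - 2 * θtr| ≤ Real.pi / 2 ^ m)
    (hyi : |yti * Real.pi / 2 ^ (t - 1) - 2 * θti| ≤ Real.pi / 2 ^ m) :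
    ‖toE ((RZ (-(Real.pi / 2))).mulVec ((RZ (yti * Real.pi / 2 ^ (t - 1))).mulVec
        ((RY (ytr * Real.pi / 2 ^ (t - 1))).mulVec ket0))) -
      toE ((RZ (-(Real.pi / 2))).mulVec ((RZ (2 * θi)).mulVec
        ((RY (2 * θr)).mulVec ket0)))‖ ≤
      Real.pi / 2 ^ (m - 1) + Real.pi * Real.sqrt (n * ε) / Real.sqrt 2 := by
  rw [rotations_mulVec_ket0, rotations_mulVec_ket0]
  have hβ := abs_sub_two_mul_le hyr hr
  have hγ := abs_sub_two_mul_le hyi hi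
  have hm : Real.pi / 2 ^ m ≤ Real.pi / 2 ^ (m - 1) := by
    gcongr
    · norm_num
    · omega
  have hb : 2 * (Real.pi * Real.sqrt (n * ε) / (2 * Real.sqrt 2)) =
      Real.pi * Real.sqrt (n * ε) / Real.sqrt 2 := by
    field_simp
  linarith [norm_rotState_sub_le (2 * θr) (ytr * Real.pi / 2 ^ (t - 1)) (2 * θi)
    (yti * Real.pi / 2 ^ (t - 1))]

theorem stmt_14 (n t m : ℕ) (hn : 0 < n) (ht : 0 < t) (hm : 0 < m)
    (ε : ℝ) (hε : 0 < ε)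
    (θr θi θtr θti : ℝ)
    (hθr : θr ∈ Set.Icc 0 (Real.pi / 2)) (hθi : θi ∈ Set.Icc 0 (Real.pi / 2))
    (hθtr : θtr ∈ Set.Icc 0 (Real.pi / 2)) (hθti : θti ∈ Set.Icc 0 (Real.pi / 2))
    (hr : |θtr - θr| ≤ Real.pi * Real.sqrt (n * ε) / (2 * Real.sqrt 2))
    (hi : |θti - θi| ≤ Real.pi * Real.sqrt (n * ε) / (2 * Real.sqrt 2))
    (ytr yti : ℝ)
    (hyr : |ytr * Real.pi / 2 ^ (t - 1) - 2 * θtr| ≤ Real.pi / 2 ^ m)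
    (hyi : |yti * Real.pi / 2 ^ (t - 1) - 2 * θti| ≤ Real.pi / 2 ^ m) :
    ‖toE ((RZ (-(Real.pi / 2))).mulVec ((RZ (yti * Real.pi / 2 ^ (t - 1))).mulVec
        ((RY (ytr * Real.pi / 2 ^ (t - 1))).mulVec ket0))) -
      toE ((RZ (-(Real.pi / 2))).mulVec ((RZ (2 * θi)).mulVec
        ((RY (2 * θr)).mulVec ket0)))‖ ≤
      Real.pi / 2 ^ (m - 1) + Real.pi * Real.sqrt (n * ε) / Real.sqrt 2 :=
  stmt_14_general n t m ε θr θi θtr θti hr hi ytr yti hyr hyi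
end

section
/- Let p ≥ 1 and δ ∈ (0,1), and define the sequence ε_0 = 0, ε_1 = pδ, and ε_k = √2 · π · p · √(ε_{k−1}) for k ≥ 2. Then for every k ≥ 1, ε_k ≤ 2π² p² δ^{1/2^{k−1}}. -/
open Real

theorem stmt_16 (p δ : ℝ) (hp : 1 ≤ p) (hδ : δ ∈ Set.Ioo (0 : ℝ) 1)
    (e : ℕ → ℝ) (he0 : e 0 = 0) (he1 : e 1 = p * δ)
    (herec : ∀ k, 2 ≤ k → e k = Real.sqrt 2 * π * p * Real.sqrt (e (k - 1))) :
    ∀ k, 1 ≤ k → e k ≤ 2 * π ^ 2 * p ^ 2 * δ ^ ((1 : ℝ) / 2 ^ (k - 1)) := by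
  obtain ⟨hδ0, hδ1⟩ := hδ
  have hp0 : (0:ℝ) < p := lt_of_lt_of_le one_pos hp
  have hπ : (3:ℝ) < π := Real.pi_gt_three
  have hsqrtC : Real.sqrt (2 * π ^ 2 * p ^ 2) = Real.sqrt 2 * π * p := by
    rw [show 2 * π ^ 2 * p ^ 2 = (Real.sqrt 2 * π * p) ^ 2 by
      rw [mul_pow, mul_pow, Real.sq_sqrt (by norm_num)]]
    exact Real.sqrt_sq (by positivity)
  intro k hk
  induction k, hk using Nat.le_induction with
  | base =>
    simp only [he1, Nat.sub_self, pow_zero, div_one, Real.rpow_one]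
    have h1 : p ≤ 2 * π ^ 2 * p ^ 2 := by nlinarith [mul_le_mul_of_nonneg_right hp hp0.le, sq_nonneg (π - 3), sq_nonneg p]
    nlinarith [mul_le_mul_of_nonneg_right h1 hδ0.le]
  | succ k hk ih =>
    have hrec := herec (k + 1) (by omega)
    simp only [Nat.add_sub_cancel] at hrec
    have hmono : Real.sqrt (e k) ≤ Real.sqrt (2 * π ^ 2 * p ^ 2 *
        δ ^ ((1 : ℝ) / 2 ^ (k - 1))) := Real.sqrt_le_sqrt ih
    have hsplit : Real.sqrt (2 * π ^ 2 * p ^ 2 * δ ^ ((1 : ℝ) / 2 ^ (k - 1)))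
        = Real.sqrt 2 * π * p * δ ^ ((1 : ℝ) / 2 ^ k) := by
      rw [Real.sqrt_mul (by positivity), hsqrtC]
      congr 1
      rw [Real.sqrt_eq_rpow, ← Real.rpow_mul hδ0.le]
      congr 1
      have hk1 : k - 1 + 1 = k := Nat.succ_pred_eq_of_pos hk
      rw [show (2:ℝ)^k = 2^(k-1) * 2 by rw [← pow_succ, hk1]]
      field_simp
    rw [hrec]
    calc Real.sqrt 2 * π * p * Real.sqrt (e k)
        ≤ Real.sqrt 2 * π * p * (Real.sqrt 2 * π * p * δ ^ ((1 : ℝ) / 2 ^ k)) := by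
          rw [← hsplit]; exact mul_le_mul_of_nonneg_left hmono (by positivity)
      _ = (Real.sqrt 2 * Real.sqrt 2) * π ^ 2 * p ^ 2 * δ ^ ((1 : ℝ) / 2 ^ k) := by ring
      _ = 2 * π ^ 2 * p ^ 2 * δ ^ ((1 : ℝ) / 2 ^ k) := by
          rw [Real.mul_self_sqrt (by norm_num)]
end

section
/- If ε ∈ (0,1), p ≥ 1, K ≥ 1, and δ = (ε/(2π²p²))^{2^{K−1}}, then the recursively bounded error sequence ε_1 = pδ, ε_k = √2 π p √(ε_{k−1}) for 2 ≤ k ≤ K satisfies ε_K ≤ 2π²p² δ^{1/2^{K−1}} = ε, and moreover ε_k < ε < 2 for all 1 ≤ k ≤ K. -/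
open Real

theorem stmt_17 (p : ℝ) (hp : 1 ≤ p) (K : ℕ) (hK : 1 ≤ K)
    (ε : ℝ) (hε : ε ∈ Set.Ioo (0 : ℝ) 1)
    (δ : ℝ) (hδ : δ = (ε / (2 * π ^ 2 * p ^ 2)) ^ (2 ^ (K - 1)))
    (e : ℕ → ℝ) (he1 : e 1 = p * δ)
    (herec : ∀ k, 2 ≤ k → k ≤ K → e k = Real.sqrt 2 * π * p * Real.sqrt (e (k - 1))) :
    e K ≤ 2 * π ^ 2 * p ^ 2 * δ ^ ((1 : ℝ) / 2 ^ (K - 1)) ∧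
      2 * π ^ 2 * p ^ 2 * δ ^ ((1 : ℝ) / 2 ^ (K - 1)) = ε ∧
      (∀ k, 1 ≤ k → k ≤ K → e k < ε) ∧ ε < 2 := by
  obtain ⟨hε0, hε1⟩ := hε
  have hπ : 3 < π := Real.pi_gt_three
  set c : ℝ := 2 * π ^ 2 * p ^ 2 with hcdef
  have hπ2 : 9 < π ^ 2 := by nlinarith
  have hp2 : 1 ≤ p ^ 2 := by nlinarith
  have hc2 : 2 < c := by
    rw [hcdef]
    nlinarith [mul_nonneg (by linarith : (0:ℝ) ≤ π ^ 2 - 9) (by linarith : (0:ℝ) ≤ p ^ 2 - 1)]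
  have hc0 : (0:ℝ) < c := by linarith
  set x : ℝ := ε / c with hxdef
  have hx0 : 0 < x := div_pos hε0 hc0
  have hx1 : x < 1 := by
    rw [hxdef, div_lt_one hc0]; linarith
  have hδ' : δ = x ^ (2 ^ (K - 1)) := hδ
  have hcx : c * x = ε := by
    rw [hxdef, mul_comm, div_mul_cancel₀ _ hc0.ne']
  have heq : c * δ ^ ((1 : ℝ) / 2 ^ (K - 1)) = ε := by
    rw [hδ', ← Real.rpow_natCast x (2 ^ (K-1)), ← Real.rpow_mul hx0.le]
    push_cast
    rw [mul_one_div, div_self (by positivity), Real.rpow_one, hcx]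
  -- square root of c
  have hsc : Real.sqrt c = Real.sqrt 2 * π * p := by
    rw [hcdef, Real.sqrt_mul (by positivity), Real.sqrt_mul (by norm_num),
      Real.sqrt_sq (by positivity), Real.sqrt_sq (by linarith)]
  have key : ∀ k, 1 ≤ k → k ≤ K →
      e k ≤ c * x ^ (2 ^ (K - k)) * (1/2 : ℝ) ^ ((1:ℝ) / 2 ^ (k - 1)) := by
    intro k hk1
    induction k, hk1 using Nat.le_induction with
    | base =>
      intro _
      simp only [Nat.sub_self, pow_zero, div_one, Real.rpow_one]
      rw [he1, hδ']
      have hX : (0:ℝ) ≤ x ^ 2 ^ (K - 1) := by positivity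
      have hpc : p ≤ π ^ 2 * p ^ 2 := by nlinarith [sq_nonneg p]
      rw [hcdef]
      nlinarith [mul_le_mul_of_nonneg_right hpc hX]
    | succ n hn ih =>
      intro hnK
      have hb := ih (by omega)
      have hrec := herec (n+1) (by omega) hnK
      simp only [Nat.add_sub_cancel] at hrec
      have hKn : K - n = (K - (n+1)) + 1 := by omega
      set m : ℕ := K - (n+1) with hm
      have hBnn : (0:ℝ) ≤ c * x ^ (2 ^ (K - n)) * (1/2 : ℝ) ^ ((1:ℝ) / 2 ^ (n - 1)) := by
        positivity
      have hsqrtB : Real.sqrt (c * x ^ (2 ^ (K - n)) * (1/2 : ℝ) ^ ((1:ℝ) / 2 ^ (n - 1)))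
          = Real.sqrt 2 * π * p * x ^ (2 ^ m) * (1/2 : ℝ) ^ ((1:ℝ) / 2 ^ n) := by
        have hXsq : x ^ (2 ^ (K - n)) = (x ^ (2 ^ m)) ^ 2 := by
          rw [hKn, pow_succ, pow_mul]
        have hs : Real.sqrt ((1/2 : ℝ) ^ ((1:ℝ) / 2 ^ (n - 1)))
            = (1/2 : ℝ) ^ ((1:ℝ) / 2 ^ n) := by
          rw [Real.sqrt_eq_rpow, ← Real.rpow_mul (by norm_num)]
          congr 1
          have h2n : (n - 1) + 1 = n := by omega
          rw [div_mul_div_comm, one_mul, ← pow_succ, h2n]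
        rw [hXsq, Real.sqrt_mul (by positivity), Real.sqrt_mul (by positivity),
          Real.sqrt_sq (by positivity), hs, hsc]
      have hsqrt : Real.sqrt (e n) ≤
          Real.sqrt 2 * π * p * x ^ (2 ^ m) * (1/2 : ℝ) ^ ((1:ℝ) / 2 ^ n) := by
        rw [← hsqrtB]
        exact Real.sqrt_le_sqrt hb
      have h2 : Real.sqrt 2 * Real.sqrt 2 = 2 := Real.mul_self_sqrt (by norm_num)
      have hfactor : (0:ℝ) ≤ Real.sqrt 2 * π * p := by positivity
      simp only [Nat.add_sub_cancel]
      calc e (n+1) = Real.sqrt 2 * π * p * Real.sqrt (e n) := hrec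
        _ ≤ Real.sqrt 2 * π * p *
            (Real.sqrt 2 * π * p * x ^ (2 ^ m) * (1/2 : ℝ) ^ ((1:ℝ) / 2 ^ n)) :=
          mul_le_mul_of_nonneg_left hsqrt hfactor
        _ = c * x ^ (2 ^ m) * (1/2 : ℝ) ^ ((1:ℝ) / 2 ^ n) := by
          rw [hcdef]
          linear_combination π ^ 2 * p ^ 2 * x ^ 2 ^ m * (1/2 : ℝ) ^ ((1:ℝ) / 2 ^ n) * h2
  have hstrict : ∀ k, 1 ≤ k → k ≤ K → e k < ε := by
    intro k hk1 hkK
    have hb := key k hk1 hkK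
    have hXle : x ^ (2 ^ (K - k)) ≤ x := by
      calc x ^ (2 ^ (K - k)) ≤ x ^ 1 :=
        pow_le_pow_of_le_one hx0.le hx1.le (Nat.one_le_two_pow)
      _ = x := pow_one x
    have hs1 : (1/2 : ℝ) ^ ((1:ℝ) / 2 ^ (k - 1)) < 1 :=
      Real.rpow_lt_one (by norm_num) (by norm_num) (by positivity)
    calc e k ≤ c * x ^ (2 ^ (K - k)) * (1/2 : ℝ) ^ ((1:ℝ) / 2 ^ (k - 1)) := hb
      _ < c * x ^ (2 ^ (K - k)) := mul_lt_of_lt_one_right (by positivity) hs1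
      _ ≤ c * x := mul_le_mul_of_nonneg_left hXle hc0.le
      _ = ε := hcx
  refine ⟨?_, heq, hstrict, by linarith⟩
  rw [heq]
  exact le_of_lt (hstrict K hK le_rfl)
end
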